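/- Suppose I is additionally strongly linearizable. Let C be any reachable bivalent configuration of algorithm A, let e = (p,m) be any step applicable to C, let 𝓒_{-e} be the set of configurations reachable from C without applying e, and let 𝓓 = {e(E) | E ∈ 𝓒_{-e} and e is applicable to E}. Then 𝓓 contains a bivalent configuration. -/

import Mathlib

/-!
A model of asynchronous message-passing systems with `n` processes, following
Fischer–Lynch–Paterson: in a step `(p, m)` process `p` receives message `m`
(`none` if no message), changes its local state, and sends a finite set of messages.
Object implementations encode invocations and responses of operations as changes
of the state of the invoking process.
-/

namespace MP

/-- A step `(p, m)`: process `p` takes a step in which it attempts to receive a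
message; it receives `m`, where `m = none` means it receives no message. -/
abbrev Step (n : ℕ) (Msg : Type) : Type := Fin n × Option Msg

/-- An operation event: the invocation of an operation `o`, or the response of `o`
with return value `v`. -/
inductive Event (Op Val : Type) : Type
  | inv (o : Op)
  | res (o : Op) (v : Val)
deriving DecidableEq

/-- The operation an event belongs to. -/
def Event.opOf {Op Val : Type} : Event Op Val → Op
  | .inv o => o
  | .res o _ => o

/-- A (deterministic) message-passing implementation for `n` processes, of an object
with operations `Op` returning values in `Val`.  In each step a process receives at
most one message, changes its local state via `trans`, and sends a finite list of
messages; invocations and responses of operations are encoded (via `eventOf`) as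
changes of the state of the invoking process.  `procOf o` is the process that may
invoke operation `o`. -/
structure Impl (n : ℕ) (Op Val : Type) : Type 1 where
  Msg : Type
  PState : Type
  init : Fin n → PState
  trans : Fin n → PState → Option Msg → PState × List (Fin n × Msg)
  eventOf : Fin n → PState → PState → Option (Event Op Val)
  procOf : Op → Fin n

variable {n : ℕ} {Op Val : Type}

/-- A configuration: the local states of all processes together with the message
buffer (the multiset of all messages sent but not yet received, tagged with their
destination process). -/
structure Config (I : Impl n Op Val) : Type where
  states : Fin n → I.PState
  buffer : Multiset (Fin n × I.Msg)

/-- The initial configuration: all processes in their initial states, empty buffer. -/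
def initConfig (I : Impl n Op Val) : Config I :=
  ⟨I.init, 0⟩

/-- A step `(p, some m)` is applicable to `C` iff `m` is in the buffer for `p`;
a step `(p, none)` is always applicable. -/
def Applicable (I : Impl n Op Val) (C : Config I) (e : Step n I.Msg) : Prop :=
  match e.2 with
  | none => True
  | some m => (e.1, m) ∈ C.buffer

open scoped Classical in
/-- The configuration resulting from applying step `e` to configuration `C`:
the stepping process changes state, the received message (if any) is removed from
the buffer, and the sent messages are added to it. -/
noncomputable def applyStep (I : Impl n Op Val) (C : Config I) (e : Step n I.Msg) :
    Config I :=
  { states := Function.update C.states e.1 (I.trans e.1 (C.states e.1) e.2).1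
    buffer :=
      (match e.2 with
        | none => C.buffer
        | some m => C.buffer.erase (e.1, m))
      + ((I.trans e.1 (C.states e.1) e.2).2 : Multiset (Fin n × I.Msg)) }

/-- A finite history (sequence of steps) `H` is applicable to `C` if each of its
steps is applicable in turn. -/
def ApplicableHist (I : Impl n Op Val) : Config I → List (Step n I.Msg) → Prop
  | _, [] => True
  | C, e :: H => Applicable I C e ∧ ApplicableHist I (applyStep I C e) H

/-- `H(C)`: the configuration obtained by applying the finite history `H` to `C`. -/
noncomputable def applyHist (I : Impl n Op Val) : Config I → List (Step n I.Msg) → Config I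
  | C, [] => C
  | C, e :: H => applyHist I (applyStep I C e) H

/-- The event (if any) encoded by the state change of the process taking step `e`
from configuration `C`. -/
noncomputable def stepEvent (I : Impl n Op Val) (C : Config I) (e : Step n I.Msg) :
    Option (Event Op Val) :=
  I.eventOf e.1 (C.states e.1) ((applyStep I C e).states e.1)

/-- The operation-level history (sequence of invocation/response events) of the run
in which `H` is applied to `C`. -/
noncomputable def runEvents (I : Impl n Op Val) :
    Config I → List (Step n I.Msg) → List (Event Op Val)
  | _, [] => []
  | C, e :: H => (stepEvent I C e).toList ++ runEvents I (applyStep I C e) H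

/-- The set of (finite) histories of implementation `I`: all finite histories
applicable to the initial configuration.  (This set is prefix-closed.) -/
def Histories (I : Impl n Op Val) : Set (List (Step n I.Msg)) :=
  {H | ApplicableHist I (initConfig I) H}

/-- The operation-level events of a history `H` of `I`. -/
noncomputable def events (I : Impl n Op Val) (H : List (Step n I.Msg)) :
    List (Event Op Val) :=
  runEvents I (initConfig I) H

/-- Operation `o` has been invoked in the event history `L`. -/
def Invoked (o : Op) (L : List (Event Op Val)) : Prop := Event.inv o ∈ L

/-- Operation `o` is complete in the event history `L`: `L` contains both its
invocation and a response for it. -/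
def Completed (o : Op) (L : List (Event Op Val)) : Prop :=
  Event.inv o ∈ L ∧ ∃ v, Event.res o v ∈ L

/-- Operation `o` is pending in `L`: invoked but with no response. -/
def Pending (o : Op) (L : List (Event Op Val)) : Prop :=
  Event.inv o ∈ L ∧ ∀ v, Event.res o v ∉ L

/-- `o` precedes `o'` in `L`: a response of `o` occurs (strictly) before the
invocation of `o'`. -/
def Precedes (L : List (Event Op Val)) (o o' : Op) : Prop :=
  ∃ (i j : ℕ) (hi : i < L.length) (hj : j < L.length),
    i < j ∧ (∃ v, L.get ⟨i, hi⟩ = Event.res o v) ∧ L.get ⟨j, hj⟩ = Event.inv o'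

/-- A sequential event history: invocations immediately followed by their matching
responses, possibly ending with a single pending invocation (no two operations are
concurrent). -/
def Sequential : List (Event Op Val) → Prop
  | [] => True
  | [Event.inv _] => True
  | Event.inv o :: Event.res o' _ :: L => o = o' ∧ Sequential L
  | _ => False

/-- `x` occurs at most once in the list `L`. -/
def AtMostOnce {β : Type _} (x : β) (L : List β) : Prop :=
  ∀ (i j : ℕ) (hi : i < L.length) (hj : j < L.length),
    L.get ⟨i, hi⟩ = x → L.get ⟨j, hj⟩ = x → i = j

/-- Operation `o` has at most one response event in `L`. -/
def AtMostOneRes (o : Op) (L : List (Event Op Val)) : Prop :=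
  ∀ (i j : ℕ) (hi : i < L.length) (hj : j < L.length) (v v' : Val),
    L.get ⟨i, hi⟩ = Event.res o v → L.get ⟨j, hj⟩ = Event.res o v' → i = j

/-- Well-formedness of an implementation: in every history, each operation is
invoked at most once, responds at most once, and responses follow invocations. -/
def WellFormed (I : Impl n Op Val) : Prop :=
  ∀ H ∈ Histories I,
    (∀ o : Op, AtMostOnce (Event.inv o) (events I H)) ∧
    (∀ o : Op, AtMostOneRes o (events I H)) ∧
    (∀ (o : Op) (v : Val), Event.res o v ∈ events I H → Event.inv o ∈ events I H)

/-- `L'` is a completion of the event history `L`: the events of a subset (`removed`)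
of the pending operations of `L` are removed, and the remaining pending operations
are completed by appending responses `R` for them. -/
def IsCompletion (L L' : List (Event Op Val)) : Prop :=
  ∃ (removed : Op → Bool) (R : List (Event Op Val)),
    (∀ o, removed o = true → Pending o L) ∧
    (∀ ev ∈ R, ∃ (o : Op) (v : Val), ev = Event.res o v ∧ Pending o L ∧ removed o = false) ∧
    (∀ o : Op, Pending o L → removed o = false → ∃ v, Event.res o v ∈ R) ∧
    (R.map Event.opOf).Nodup ∧
    L' = L.filter (fun ev => !removed ev.opOf) ++ R

/-- `f` is a linearization function for (the set of histories of) `I` with respect to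
the sequential specification `Spec`: it maps each history `H` of `I` to a sequential
history `f H` that (1) has exactly the same operations (with the same responses) as
some completion of the events of `H`, (2) respects precedence, and (3) conforms to
`Spec`. -/
def IsLinearizationFn (I : Impl n Op Val) (Spec : List (Event Op Val) → Prop)
    (f : List (Step n I.Msg) → List (Event Op Val)) : Prop :=
  ∀ H ∈ Histories I,
    Sequential (f H) ∧
    (∃ L', IsCompletion (events I H) L' ∧
      (∀ ev : Event Op Val, ev ∈ f H ↔ ev ∈ L') ∧
      (∀ o o' : Op, Precedes L' o o' → Precedes (f H) o o')) ∧
    Spec (f H)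

/-- `I` is linearizable with respect to the sequential specification `Spec`. -/
def Linearizable (I : Impl n Op Val) (Spec : List (Event Op Val) → Prop) : Prop :=
  ∃ f, IsLinearizationFn I Spec f

/-- `I` is strongly linearizable: there is a linearization function mapping
prefixes of histories to prefixes of their linearizations. -/
def StronglyLinearizable (I : Impl n Op Val) (Spec : List (Event Op Val) → Prop) : Prop :=
  ∃ f, IsLinearizationFn I Spec f ∧
    ∀ G H, G ∈ Histories I → H ∈ Histories I → G <+: H → f G <+: f H

/-- The finite history consisting of the first `k` steps of an infinite history `S`. -/
def prefixSteps {β : Type _} (S : ℕ → β) (k : ℕ) : List β :=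
  (List.range k).map S

/-- The infinite history `S` is applicable to `C`: every step is applicable to the
configuration reached by the preceding steps. -/
def InfApplicable (I : Impl n Op Val) (C : Config I) (S : ℕ → Step n I.Msg) : Prop :=
  ∀ k, Applicable I (applyHist I C (prefixSteps S k)) (S k)

/-- Process `p` is correct in the infinite history `S`: it takes infinitely many steps. -/
def CorrectProc {Msg : Type} (p : Fin n) (S : ℕ → Step n Msg) : Prop :=
  ∀ k, ∃ k' ≥ k, (S k').1 = p

/-- At most one process crashes (i.e., takes only finitely many steps) in `S`. -/
def AtMostOneCrash {Msg : Type} (S : ℕ → Step n Msg) : Prop :=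
  ∀ p q : Fin n, ¬ CorrectProc p S → ¬ CorrectProc q S → p = q

/-- Every message sent to a correct process is eventually received. -/
def FairDelivery (I : Impl n Op Val) (C : Config I) (S : ℕ → Step n I.Msg) : Prop :=
  ∀ (k : ℕ) (p : Fin n) (m : I.Msg), CorrectProc p S →
    (p, m) ∈ (applyHist I C (prefixSteps S k)).buffer →
    ∃ k' ≥ k, S k' = (p, some m)

/-- `I` is 1-resilient lock-free: for every reachable configuration (reached by a
history `H₀`) with a pending operation by process `p`, and every infinite history
applicable to it in which at most one process crashes, `p` is correct, and every
message sent to a correct process is eventually received, some finite prefix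
completes an operation not yet complete. -/
def OneResilientLockFree (I : Impl n Op Val) : Prop :=
  ∀ H₀ ∈ Histories I, ∀ (p : Fin n) (o : Op),
    I.procOf o = p → Pending o (events I H₀) →
    ∀ S : ℕ → Step n I.Msg,
      InfApplicable I (applyHist I (initConfig I) H₀) S →
      AtMostOneCrash S → CorrectProc p S →
      FairDelivery I (applyHist I (initConfig I) H₀) S →
      ∃ (k : ℕ) (o' : Op),
        Completed o' (events I (H₀ ++ prefixSteps S k)) ∧ ¬ Completed o' (events I H₀)

end MP

namespace MP

/-- The operations of a Test-or-Set (ToS) object: a single TEST and a single SET. -/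
inductive ToSOp : Type
  | test
  | set
deriving DecidableEq

/-- Sequential specification of Test-or-Set (`true` codes the bit 1, `false` codes 0):
a TEST returns 1 iff a SET occurs before it, and 0 otherwise. -/
def ToSSpec (L : List (Event ToSOp Bool)) : Prop :=
  ∀ (i : ℕ) (hi : i < L.length) (v : Bool), L.get ⟨i, hi⟩ = Event.res ToSOp.test v →
    (v = true ↔ ∃ (j : ℕ) (hj : j < L.length), j < i ∧ L.get ⟨j, hj⟩ = Event.inv ToSOp.set)

variable {n : ℕ}

/-- The system obtained by running algorithm `A` on a ToS implementation `I`: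
the distinguished process `p0` invokes TEST (as its first step), the distinguished
process `p1 ≠ p0` invokes SET (as its first step), each operation is invoked only
once, and the other processes only help. -/
structure ToSAlg (I : Impl n ToSOp Bool) (p0 p1 : Fin n) : Prop where
  distinct : p0 ≠ p1
  proc_test : I.procOf ToSOp.test = p0
  proc_set : I.procOf ToSOp.set = p1
  events_own : ∀ (p : Fin n) (s s' : I.PState) (ev : Event ToSOp Bool),
    I.eventOf p s s' = some ev → I.procOf ev.opOf = p
  wellFormed : WellFormed I
  invokes_test : ∀ m : Option I.Msg,
    I.eventOf p0 (I.init p0) (I.trans p0 (I.init p0) m).1 = some (Event.inv ToSOp.test)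
  invokes_set : ∀ m : Option I.Msg,
    I.eventOf p1 (I.init p1) (I.trans p1 (I.init p1) m).1 = some (Event.inv ToSOp.set)

/-- The TEST operation has returned the value `v` in the history `H` (applied to the
initial configuration). -/
def TestReturned (I : Impl n ToSOp Bool) (H : List (Step n I.Msg)) (v : Bool) : Prop :=
  Event.res ToSOp.test v ∈ events I H

/-- The configuration reached by the history `H₀` is `v`-valent: there is no finite
history `H` applicable to it such that the TEST operation has returned `1 - v`. -/
def ToSValent (I : Impl n ToSOp Bool) (H₀ : List (Step n I.Msg)) (v : Bool) : Prop :=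
  (H₀ ∈ Histories I) ∧
  ∀ H : List (Step n I.Msg), (H₀ ++ H) ∈ Histories I → ¬ TestReturned I (H₀ ++ H) (!v)

/-- The configuration reached by `H₀` is bivalent: neither 0-valent nor 1-valent. -/
def ToSBivalent (I : Impl n ToSOp Bool) (H₀ : List (Step n I.Msg)) : Prop :=
  (H₀ ∈ Histories I) ∧ ¬ ToSValent I H₀ false ∧ ¬ ToSValent I H₀ true

end MP

namespace MP

open List

variable {n : ℕ} {Op Val : Type}

section Basic

variable (I : Impl n Op Val)

lemma applyHist_append (C : Config I) (H1 H2 : List (Step n I.Msg)) :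
    applyHist I C (H1 ++ H2) = applyHist I (applyHist I C H1) H2 := by
  induction H1 generalizing C with
  | nil => simp [applyHist]
  | cons s t ih => simp [applyHist, ih]

lemma ApplicableHist_append (C : Config I) (H1 H2 : List (Step n I.Msg)) :
    ApplicableHist I C (H1 ++ H2) ↔
      ApplicableHist I C H1 ∧ ApplicableHist I (applyHist I C H1) H2 := by
  induction H1 generalizing C with
  | nil => simp [ApplicableHist, applyHist]
  | cons s t ih => simp [ApplicableHist, applyHist, ih, and_assoc]

lemma runEvents_append (C : Config I) (H1 H2 : List (Step n I.Msg)) :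
    runEvents I C (H1 ++ H2) =
      runEvents I C H1 ++ runEvents I (applyHist I C H1) H2 := by
  induction H1 generalizing C with
  | nil => simp [runEvents, applyHist]
  | cons s t ih =>simp [runEvents, applyHist, ih]

lemma mem_Histories_append {H₀ H : List (Step n I.Msg)} :
    (H₀ ++ H) ∈ Histories I ↔
      H₀ ∈ Histories I ∧ ApplicableHist I (applyHist I (initConfig I) H₀) H := by
  simp [Histories, ApplicableHist_append]

lemma events_append (H₀ H : List (Step n I.Msg)) :
    events I (H₀ ++ H) =
      events I H₀ ++ runEvents I (applyHist I (initConfig I) H₀) H :=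
  runEvents_append I _ _ _

lemma applyStep_states_ne {C : Config I} {e : Step n I.Msg} {q : Fin n}
    (h : q ≠ e.1) : (applyStep I C e).states q = C.states q :=
  Function.update_of_ne h _ _

lemma applyStep_states_self {C : Config I} {e : Step n I.Msg} :
    (applyStep I C e).states e.1 = (I.trans e.1 (C.states e.1) e.2).1 :=
  Function.update_self _ _ _

lemma applyHist_states_free {C : Config I} {H : List (Step n I.Msg)} {q : Fin n}
    (h : ∀ s ∈ H, s.1 ≠ q) : (applyHist I C H).states q = C.states q := by
  induction H generalizing C with
  | nil => rfl
  | cons s t ih =>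
    rw [applyHist, ih (fun s hs => h s (mem_cons_of_mem _ hs))]
    exact applyStep_states_ne I (fun hq => h s (mem_cons_self) hq.symm)

lemma stepEvent_eq (C : Config I) (e : Step n I.Msg) :
    stepEvent I C e = I.eventOf e.1 (C.states e.1) ((I.trans e.1 (C.states e.1) e.2).1) := by
  rw [stepEvent, applyStep_states_self]

lemma stepEvent_congr {C D : Config I} {e : Step n I.Msg}
    (h : C.states e.1 = D.states e.1) : stepEvent I C e = stepEvent I D e := by
  rw [stepEvent_eq, stepEvent_eq, h]

lemma runEvents_agree {C D : Config I} {p : Fin n} {H : List (Step n I.Msg)}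
    (hfree : ∀ s ∈ H, s.1 ≠ p) (h : ∀ q, q ≠ p → C.states q = D.states q) :
    runEvents I C H = runEvents I D H := by
  induction H generalizing C D with
  | nil => rfl
  | cons s t ih =>
    have hs : s.1 ≠ p := hfree s (mem_cons_self)
    have hst : C.states s.1 = D.states s.1 := h s.1 hs
    rw [runEvents, runEvents, stepEvent_congr I hst,
      ih (fun s hs => hfree s (mem_cons_of_mem _ hs))]
    intro q hq
    by_cases hqs : q = s.1
    · subst hqs
      rw [applyStep_states_self, applyStep_states_self, hst]
    · rw [applyStep_states_ne I hqs, applyStep_states_ne I hqs]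
      exact h q hq

end Basic

section Comm

open scoped Classical

variable (I : Impl n Op Val)

lemma step_ne_of_fst_ne {e e' : Step n I.Msg} (h : e.1 ≠ e'.1) : e ≠ e' :=
  fun hh => h (by rw [hh])

lemma config_ext {C D : Config I} (h1 : C.states = D.states)
    (h2 : C.buffer = D.buffer) : C = D := by
  cases C; cases D; simp_all

lemma applyStep_states (C : Config I) (e : Step n I.Msg) :
    (applyStep I C e).states
      = Function.update C.states e.1 (I.trans e.1 (C.states e.1) e.2).1 := rfl

lemma applyStep_buffer (C : Config I) (e : Step n I.Msg) :
    (applyStep I C e).buffer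
      = (match e.2 with
          | none => C.buffer
          | some m => C.buffer.erase (e.1, m))
        + ((I.trans e.1 (C.states e.1) e.2).2 : Multiset (Fin n × I.Msg)) := rfl

lemma Applicable_preserved_step {C : Config I} {e e' : Step n I.Msg}
    (he : Applicable I C e) (hne : e' ≠ e) (he' : Applicable I C e') :
    Applicable I (applyStep I C e') e := by
  rcases e with ⟨p, m⟩
  cases m with
  | none => trivial
  | some m =>
    have hmem : ((p, m) : Fin n × I.Msg) ∈ C.buffer := he
    show ((p, m) : Fin n × I.Msg) ∈ (applyStep I C e').buffer
    rw [applyStep_buffer]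
    rcases e' with ⟨q, m'⟩
    cases m' with
    | none => exact Multiset.mem_add.2 (Or.inl hmem)
    | some m' =>
      have hpair : ((p, m) : Fin n × I.Msg) ≠ (q, m') := by
        intro hpq
        obtain ⟨h1, h2⟩ := Prod.ext_iff.1 hpq
        dsimp only at h1 h2
        subst h1; subst h2
        exact hne rfl
      apply Multiset.mem_add.2
      exact Or.inl ((Multiset.mem_erase_of_ne hpair).2 hmem)

lemma Applicable_preserved_hist {C : Config I} {e : Step n I.Msg}
    {H : List (Step n I.Msg)} (he : Applicable I C e) (hH : ApplicableHist I C H)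
    (hnot : e ∉ H) : Applicable I (applyHist I C H) e := by
  induction H generalizing C with
  | nil => exact he
  | cons s t ih =>
    rw [applyHist]
    exact ih
      (Applicable_preserved_step I he (fun h => hnot (h ▸ mem_cons_self)) hH.1)
      hH.2 (fun h => hnot (mem_cons_of_mem _ h))

lemma applyStep_comm {C : Config I} {e e' : Step n I.Msg} (hne : e.1 ≠ e'.1)
    (he : Applicable I C e) (he' : Applicable I C e') :
    applyStep I (applyStep I C e) e' = applyStep I (applyStep I C e') e := by
  have hs : (applyStep I C e).states e'.1 = C.states e'.1 :=
    applyStep_states_ne I (Ne.symm hne)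
  have hs' : (applyStep I C e').states e.1 = C.states e.1 :=
    applyStep_states_ne I hne
  apply config_ext
  · simp only [applyStep_states]
    rw [Function.update_of_ne (Ne.symm hne), Function.update_of_ne hne]
    exact Function.update_comm hne _ _ _
  · rw [applyStep_buffer I (applyStep I C e) e', applyStep_buffer I (applyStep I C e') e,
      applyStep_buffer I C e, applyStep_buffer I C e', hs, hs']
    rcases e with ⟨p, m⟩
    rcases e' with ⟨q, m'⟩
    simp only at hne hs hs' ⊢
    set Sp := (↑(I.trans p (C.states p) m).2 : Multiset (Fin n × I.Msg))
    set Sq := (↑(I.trans q (C.states q) m').2 : Multiset (Fin n × I.Msg))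
    cases m with
    | none =>
      cases m' with
      | none => exact add_right_comm _ _ _
      | some m' =>
        have hq : ((q, m') : Fin n × I.Msg) ∈ C.buffer := he'
        show (C.buffer + Sp).erase (q, m') + Sq = C.buffer.erase (q, m') + Sq + Sp
        rw [Multiset.erase_add_left_pos _ hq, add_right_comm]
    | some m =>
      have hp : ((p, m) : Fin n × I.Msg) ∈ C.buffer := he
      cases m' with
      | none =>
        show C.buffer.erase (p, m) + Sp + Sq = (C.buffer + Sq).erase (p, m) + Sp
        rw [Multiset.erase_add_left_pos _ hp, add_right_comm]
      | some m' =>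
        have hq : ((q, m') : Fin n × I.Msg) ∈ C.buffer := he'
        have hpair : ((q, m') : Fin n × I.Msg) ≠ (p, m) := by
          intro h
          obtain ⟨h1, h2⟩ := Prod.ext_iff.1 h
          exact hne (by dsimp only at h1 ⊢; rw [h1])
        have hpair' : ((p, m) : Fin n × I.Msg) ≠ (q, m') := by
          intro h
          obtain ⟨h1, h2⟩ := Prod.ext_iff.1 h
          exact hne (by dsimp only at h1 ⊢; rw [h1])
        show (C.buffer.erase (p, m) + Sp).erase (q, m') + Sq
            = (C.buffer.erase (q, m') + Sq).erase (p, m) + Sp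
        rw [Multiset.erase_add_left_pos _ ((Multiset.mem_erase_of_ne hpair).2 hq),
          Multiset.erase_add_left_pos _ ((Multiset.mem_erase_of_ne hpair').2 hp),
          Multiset.erase_comm, add_right_comm]

lemma hist_comm {X : Config I} {e : Step n I.Msg} {H : List (Step n I.Msg)}
    (hfree : ∀ s ∈ H, s.1 ≠ e.1) (he : Applicable I X e)
    (hH : ApplicableHist I X H) :
    ApplicableHist I (applyStep I X e) H ∧
    Applicable I (applyHist I X H) e ∧
    applyHist I (applyStep I X e) H = applyStep I (applyHist I X H) e := by
  induction H generalizing X with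
  | nil => exact ⟨trivial, he, rfl⟩
  | cons s t ih =>
    have hs1 : s.1 ≠ e.1 := hfree s (mem_cons_self)
    have hsne : s ≠ e := step_ne_of_fst_ne I hs1
    have hes : Applicable I (applyStep I X e) s :=
      Applicable_preserved_step I hH.1 (Ne.symm hsne) he
    have hse : Applicable I (applyStep I X s) e :=
      Applicable_preserved_step I he hsne hH.1
    have hcomm : applyStep I (applyStep I X e) s = applyStep I (applyStep I X s) e :=
      applyStep_comm I (fun h => hs1 h.symm) he hH.1
    obtain ⟨h1, h2, h3⟩ := ih (fun s' hs' => hfree s' (mem_cons_of_mem _ hs')) hse hH.2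
    refine ⟨⟨hes, ?_⟩, h2, ?_⟩
    · rw [show applyStep I (applyStep I X e) s = _ from hcomm]; exact h1
    · show applyHist I (applyStep I (applyStep I X e) s) t = _
      rw [hcomm]; exact h3

end Comm
section Valence

variable {I : Impl n ToSOp Bool}

lemma testReturned_mono {H₀ H : List (Step n I.Msg)} {v : Bool}
    (h : TestReturned I H₀ v) : TestReturned I (H₀ ++ H) v := by
  rw [TestReturned, events_append]
  exact mem_append_left _ h

lemma valent_mono {G H : List (Step n I.Msg)} {v : Bool}
    (h : ToSValent I G v) (hmem : (G ++ H) ∈ Histories I) :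
    ToSValent I (G ++ H) v := by
  refine ⟨hmem, fun H' hm hr => ?_⟩
  rw [append_assoc] at hm hr
  exact h.2 (H ++ H') hm hr

lemma not_valent_iff {G : List (Step n I.Msg)} {v : Bool} (hG : G ∈ Histories I) :
    ¬ ToSValent I G v ↔
      ∃ H, (G ++ H) ∈ Histories I ∧ TestReturned I (G ++ H) (!v) := by
  rw [ToSValent]
  simp only [hG, true_and]
  push_neg
  simp only [not_not]

lemma res_test_unique (hwf : WellFormed I) {H : List (Step n I.Msg)}
    (hH : H ∈ Histories I) {v w : Bool}
    (h1 : Event.res ToSOp.test v ∈ events I H)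
    (h2 : Event.res ToSOp.test w ∈ events I H) : v = w := by
  obtain ⟨i, hi⟩ := List.mem_iff_get.1 h1
  obtain ⟨j, hj⟩ := List.mem_iff_get.1 h2
  have := (hwf H hH).2.1 ToSOp.test i j i.2 j.2 v w (by simpa using hi) (by simpa using hj)
  have hij : i = j := Fin.ext this
  rw [hij, hj] at hi
  injection hi with _ hvw
  exact hvw.symm

lemma valent_of_returned (hwf : WellFormed I) {G : List (Step n I.Msg)} {v : Bool}
    (hG : G ∈ Histories I) (hr : TestReturned I G v) : ToSValent I G v := by
  refine ⟨hG, fun H hm hret => ?_⟩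
  have := res_test_unique hwf hm (testReturned_mono hr) hret
  exact absurd this (by cases v <;> simp)

lemma valent_transport {A A' : List (Step n I.Msg)} {v : Bool}
    (hA' : A' ∈ Histories I)
    (hcfg : applyHist I (initConfig I) A = applyHist I (initConfig I) A')
    (hev : ∀ ev : Event ToSOp Bool, ev ∈ events I A ↔ ev ∈ events I A')
    (h : ToSValent I A v) : ToSValent I A' v := by
  refine ⟨hA', fun H hm hret => ?_⟩
  have hm' : (A ++ H) ∈ Histories I := by
    rw [mem_Histories_append]
    rw [mem_Histories_append] at hm
    exact ⟨h.1, by rw [hcfg]; exact hm.2⟩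
  apply h.2 H hm'
  rw [TestReturned, events_append] at hret ⊢
  rcases mem_append.1 hret with hl | hr
  · exact mem_append_left _ ((hev _).2 hl)
  · rw [hcfg]
    exact mem_append_right _ hr
end Valence
section Scheduler

open scoped Classical

variable (I : Impl n Op Val)

lemma prefixSteps_succ {β : Type _} (S : ℕ → β) (k : ℕ) :
    prefixSteps S (k + 1) = prefixSteps S k ++ [S k] := by
  simp [prefixSteps, List.range_succ]

lemma infApplicable_prefix {X : Config I} {S : ℕ → Step n I.Msg}
    (h : InfApplicable I X S) (k : ℕ) : ApplicableHist I X (prefixSteps S k) := by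
  induction k with
  | zero => trivial
  | succ k ih =>
    rw [prefixSteps_succ, ApplicableHist_append]
    exact ⟨ih, h k, trivial⟩

variable (ps : List (Fin n)) (hps : ps ≠ []) (X : Config I)

private noncomputable def livePred : Fin n × I.Msg → Prop := fun x => x.1 ∈ ps

noncomputable def schedStep (st : Config I × List (Fin n × I.Msg)) (k : ℕ) :
    Step n I.Msg :=
  if k % 2 = 0 then
    (ps.get ⟨(k / 2) % ps.length, Nat.mod_lt _ (List.length_pos_iff.2 hps)⟩, none)
  else
    match st.2 with
    | [] => (ps.get ⟨0, List.length_pos_iff.2 hps⟩, none)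
    | a :: _ => (a.1, some a.2)

noncomputable def schedNext (st : Config I × List (Fin n × I.Msg)) (k : ℕ) :
    Config I × List (Fin n × I.Msg) :=
  let e := schedStep I ps hps st k
  (applyStep I st.1 e,
    (if k % 2 = 0 then st.2 else st.2.tail)
      ++ (I.trans e.1 (st.1.states e.1) e.2).2.filter (fun x => decide (x.1 ∈ ps)))

noncomputable def schedState : ℕ → Config I × List (Fin n × I.Msg)
  | 0 => (X, (X.buffer.filter (fun x => x.1 ∈ ps)).toList)
  | (k + 1) => schedNext I ps hps (schedState k) k

noncomputable def schedS (k : ℕ) : Step n I.Msg :=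
  schedStep I ps hps (schedState I ps hps X k) k

lemma sched_config (k : ℕ) :
    (schedState I ps hps X k).1 = applyHist I X (prefixSteps (schedS I ps hps X) k) := by
  induction k with
  | zero => rfl
  | succ k ih =>
    rw [prefixSteps_succ, applyHist_append]
    show (schedNext I ps hps (schedState I ps hps X k) k).1 = _
    rw [schedNext]
    simp only
    rw [ih]
    rfl

lemma sched_queue (k : ℕ) :
    ((schedState I ps hps X k).2 : Multiset (Fin n × I.Msg))
      = (schedState I ps hps X k).1.buffer.filter (fun x => x.1 ∈ ps) := by
  induction k with
  | zero =>
    show ((X.buffer.filter (fun x => x.1 ∈ ps)).toList : Multiset (Fin n × I.Msg)) = _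
    rw [Multiset.coe_toList]
    rfl
  | succ k ih =>
    set st := schedState I ps hps X k with hst
    set e := schedStep I ps hps st k with he
    have hsent : ((((I.trans e.1 (st.1.states e.1) e.2).2.filter
        (fun x => decide (x.1 ∈ ps))) : List _) : Multiset (Fin n × I.Msg))
        = ((I.trans e.1 (st.1.states e.1) e.2).2 : Multiset (Fin n × I.Msg)).filter
            (fun x => x.1 ∈ ps) := by
      rw [← Multiset.filter_coe]
    show (((if k % 2 = 0 then st.2 else st.2.tail)
        ++ (I.trans e.1 (st.1.states e.1) e.2).2.filter (fun x => decide (x.1 ∈ ps))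
          : List _) : Multiset (Fin n × I.Msg))
      = (applyStep I st.1 e).buffer.filter (fun x => x.1 ∈ ps)
    rw [← Multiset.coe_add, hsent, applyStep_buffer, Multiset.filter_add]
    by_cases hk : k % 2 = 0
    · -- even: step receives nothing
      have he2 : e.2 = none := by rw [he, schedStep, if_pos hk]
      rw [if_pos hk, he2, ih]
    · rw [if_neg hk]
      have hq : st.2 = [] ∨ ∃ a t, st.2 = a :: t := by
        cases st.2 with
        | nil => exact Or.inl rfl
        | cons a t => exact Or.inr ⟨a, t, rfl⟩
      rcases hq with hnil | ⟨a, t, hat⟩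
      · have he2 : e.2 = none := by
          rw [he, schedStep, if_neg hk, hnil]
        rw [hnil, he2]
        have : (st.1.buffer.filter (fun x => x.1 ∈ ps)) = 0 := by
          rw [← ih, hnil]; rfl
        rw [this]
        rfl
      · have heq : e = (a.1, some a.2) := by rw [he, schedStep, if_neg hk, hat]
        have hamem : a ∈ st.1.buffer.filter (fun x => x.1 ∈ ps) := by
          rw [← ih, hat]; exact mem_cons_self
        have hpa : a.1 ∈ ps := (Multiset.mem_filter.1 hamem).2
        have haB : a ∈ st.1.buffer := (Multiset.mem_filter.1 hamem).1
        have herase : (match e.2 with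
            | none => st.1.buffer
            | some m => st.1.buffer.erase (e.1, m)) = st.1.buffer.erase a := by
          rw [heq]
        rw [herase, hat]
        simp only [List.tail_cons]
        congr 1
        have hfe : (st.1.buffer.erase a).filter (fun x => x.1 ∈ ps)
            = (st.1.buffer.filter (fun x => x.1 ∈ ps)).erase a := by
          have hcons : a ::ₘ st.1.buffer.erase a = st.1.buffer :=
            Multiset.cons_erase haB
          have h2 : st.1.buffer.filter (fun x => x.1 ∈ ps)
              = a ::ₘ (st.1.buffer.erase a).filter (fun x => x.1 ∈ ps) := by
            rw [← Multiset.filter_cons_of_pos (p := fun x => x.1 ∈ ps) (st.1.buffer.erase a) hpa, hcons]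
          rw [h2, Multiset.erase_cons_head]
        rw [hfe, ← ih, hat, ← Multiset.cons_coe, Multiset.erase_cons_head]
lemma sched_applicable (k : ℕ) :
    Applicable I (schedState I ps hps X k).1 (schedS I ps hps X k) := by
  rw [schedS, schedStep]
  by_cases hk : k % 2 = 0
  · rw [if_pos hk]; trivial
  · rw [if_neg hk]
    rcases hq : (schedState I ps hps X k).2 with _ | ⟨a, t⟩
    · trivial
    · show ((a.1, a.2) : Fin n × I.Msg) ∈ (schedState I ps hps X k).1.buffer
      have : a ∈ ((schedState I ps hps X k).2 : Multiset (Fin n × I.Msg)) := by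
        rw [hq]; exact mem_cons_self
      rw [sched_queue] at this
      exact (Multiset.mem_filter.1 this).1

lemma sched_infApplicable : InfApplicable I X (schedS I ps hps X) := by
  intro k
  rw [← sched_config]
  exact sched_applicable I ps hps X k

lemma sched_proc_mem (k : ℕ) : (schedS I ps hps X k).1 ∈ ps := by
  rw [schedS, schedStep]
  by_cases hk : k % 2 = 0
  · rw [if_pos hk]; exact List.get_mem _ _
  · rw [if_neg hk]
    rcases hq : (schedState I ps hps X k).2 with _ | ⟨a, t⟩
    · exact List.get_mem _ _
    · show a.1 ∈ ps
      have : a ∈ ((schedState I ps hps X k).2 : Multiset (Fin n × I.Msg)) := by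
        rw [hq]; exact mem_cons_self
      rw [sched_queue] at this
      exact (Multiset.mem_filter.1 this).2

lemma sched_correct {q : Fin n} (hq : q ∈ ps) : CorrectProc q (schedS I ps hps X) := by
  obtain ⟨i, hi⟩ := List.mem_iff_get.1 hq
  intro k
  refine ⟨2 * (ps.length * k + i.1), ?_, ?_⟩
  · have h1 : k ≤ ps.length * k := Nat.le_mul_of_pos_left k (List.length_pos_iff.2 hps)
    omega
  · rw [schedS, schedStep, if_pos (Nat.mul_mod_right 2 _)]
    have h2 : 2 * (ps.length * k + i.1) / 2 = ps.length * k + i.1 :=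
      Nat.mul_div_cancel_left _ (by norm_num)
    have h3 : (ps.length * k + i.1) % ps.length = i.1 := by
      rw [Nat.mul_add_mod]
      exact Nat.mod_eq_of_lt i.2
    have hA : 2 * (ps.length * k + i.1) / 2 % ps.length = i.1 := by rw [h2, h3]
    have hfin : (⟨2 * (ps.length * k + i.1) / 2 % ps.length,
        Nat.mod_lt _ (List.length_pos_iff.2 hps)⟩ : Fin ps.length) = i := Fin.ext hA
    show (ps.get ⟨2 * (ps.length * k + i.1) / 2 % ps.length,
        Nat.mod_lt _ (List.length_pos_iff.2 hps)⟩, (none : Option I.Msg)).1 = q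
    show ps.get ⟨2 * (ps.length * k + i.1) / 2 % ps.length,
        Nat.mod_lt _ (List.length_pos_iff.2 hps)⟩ = q
    rw [hfin, hi]

lemma sched_queue_succ (k : ℕ) : (schedState I ps hps X (k+1)).2
    = (if k % 2 = 0 then (schedState I ps hps X k).2
        else (schedState I ps hps X k).2.tail)
      ++ ((I.trans (schedS I ps hps X k).1
            ((schedState I ps hps X k).1.states (schedS I ps hps X k).1)
            (schedS I ps hps X k).2).2.filter (fun x => decide (x.1 ∈ ps))) := rfl

lemma sched_deliver {p : Fin n} {m : I.Msg} :
    ∀ d k j, 2 * j + (1 - k % 2) ≤ d →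
      (schedState I ps hps X k).2[j]? = some (p, m) →
      ∃ k' ≥ k, schedS I ps hps X k' = (p, some m) := by
  intro d
  induction d with
  | zero =>
    intro k j hd hget
    have hj0 : j = 0 := by omega
    have hk1 : k % 2 = 1 := by omega
    subst hj0
    rcases hq : (schedState I ps hps X k).2 with _ | ⟨a, t⟩
    · rw [hq] at hget; simp at hget
    · refine ⟨k, le_refl _, ?_⟩
      rw [schedS, schedStep, if_neg (by omega), hq]
      have : a = (p, m) := by rw [hq] at hget; simpa using hget
      rw [this]
  | succ d ih =>
    intro k j hd hget
    have hjlt : j < (schedState I ps hps X k).2.length :=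
      (List.getElem?_eq_some_iff.1 hget).1
    by_cases hk : k % 2 = 0
    · -- even step: queue is extended on the right
      have hget' : (schedState I ps hps X (k+1)).2[j]? = some (p, m) := by
        rw [sched_queue_succ, if_pos hk, List.getElem?_append, if_pos hjlt]
        exact hget
      obtain ⟨k', hk1, hk2⟩ := ih (k+1) j (by omega) hget'
      exact ⟨k', by omega, hk2⟩
    · -- odd step: head is delivered
      rcases hq : (schedState I ps hps X k).2 with _ | ⟨a, t⟩
      · rw [hq] at hget; simp at hget
      · cases j with
        | zero =>
          refine ⟨k, le_refl _, ?_⟩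
          rw [schedS, schedStep, if_neg hk, hq]
          have : a = (p, m) := by rw [hq] at hget; simpa using hget
          rw [this]
        | succ j' =>
          have hgt : t[j']? = some (p, m) := by
            rw [hq] at hget
            simpa using hget
          have hjt : j' < t.length := (List.getElem?_eq_some_iff.1 hgt).1
          have hget' : (schedState I ps hps X (k+1)).2[j']? = some (p, m) := by
            rw [sched_queue_succ, if_neg hk, hq, List.tail_cons,
              List.getElem?_append, if_pos hjt]
            exact hgt
          obtain ⟨k', hk1, hk2⟩ := ih (k+1) j' (by omega) hget'
          exact ⟨k', by omega, hk2⟩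

lemma sched_fair : FairDelivery I X (schedS I ps hps X) := by
  intro k p m hcp hmem
  rw [← sched_config] at hmem
  have hp : (p, m) ∈ ((schedState I ps hps X k).2 : Multiset (Fin n × I.Msg)) := by
    rw [sched_queue]
    have hpps : p ∈ ps := by
      obtain ⟨k', _, hk'⟩ := hcp 0
      rw [← hk']
      exact sched_proc_mem I ps hps X k'
    exact Multiset.mem_filter.2 ⟨hmem, hpps⟩
  obtain ⟨⟨j, hj⟩, hget⟩ := List.mem_iff_get.1 hp
  have hget' : (schedState I ps hps X k).2[j]? = some (p, m) := by
    rw [List.getElem?_eq_getElem hj]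
    exact congrArg some hget
  exact sched_deliver I ps hps X (2 * j + 1) k j (by omega) hget'

lemma scheduler_exists {ps' : List (Fin n)} (hps' : ps' ≠ []) (X' : Config I) :
    ∃ S : ℕ → Step n I.Msg,
      InfApplicable I X' S ∧ (∀ q ∈ ps', CorrectProc q S) ∧
      (∀ k, (S k).1 ∈ ps') ∧ FairDelivery I X' S :=
  ⟨schedS I ps' hps' X', sched_infApplicable I ps' hps' X',
    fun _ hq => sched_correct I ps' hps' X' hq,
    sched_proc_mem I ps' hps' X', sched_fair I ps' hps' X'⟩

end Scheduler
section LockFree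

variable {I : Impl n ToSOp Bool} {p0 p1 : Fin n}

lemma invoke_mem_runEvents {P : Fin n} {ev : Event ToSOp Bool}
    (hinv : ∀ m : Option I.Msg,
      I.eventOf P (I.init P) (I.trans P (I.init P) m).1 = some ev) :
    ∀ (H : List (Step n I.Msg)) (X : Config I), X.states P = I.init P →
      (∃ s ∈ H, s.1 = P) → ev ∈ runEvents I X H := by
  intro H
  induction H with
  | nil =>
    rintro X _ ⟨s, hs, _⟩
    simp at hs
  | cons s t ih =>
    rintro X hX ⟨s', hs', hP⟩
    rw [runEvents]
    by_cases hsP : s.1 = P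
    · have hse : stepEvent I X s = some ev := by
        rcases s with ⟨sp, sm⟩
        dsimp only at hsP
        subst hsP
        rw [stepEvent_eq, hX]
        exact hinv sm
      rw [hse]
      exact mem_append_left _ (mem_cons_self)
    · apply mem_append_right
      refine ih (applyStep I X s) ?_ ⟨s', ?_, hP⟩
      · rw [applyStep_states_ne I (fun h => hsP h.symm), hX]
      · rcases mem_cons.1 hs' with rfl | hmem
        · exact absurd hP hsP
        · exact hmem

lemma invoked_of_stepped {P : Fin n} {ev : Event ToSOp Bool}
    (hinv : ∀ m : Option I.Msg,
      I.eventOf P (I.init P) (I.trans P (I.init P) m).1 = some ev)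
    {G : List (Step n I.Msg)} (h : ∃ s ∈ G, s.1 = P) : ev ∈ events I G :=
  invoke_mem_runEvents hinv G (initConfig I) rfl h

lemma events_invoke_step {P : Fin n} {ev : Event ToSOp Bool}
    (hinv : ∀ m : Option I.Msg,
      I.eventOf P (I.init P) (I.trans P (I.init P) m).1 = some ev)
    {G : List (Step n I.Msg)} (hfree : ∀ s ∈ G, s.1 ≠ P) :
    events I (G ++ [((P, none) : Step n I.Msg)]) = events I G ++ [ev] := by
  rw [events_append]
  congr 1
  have hst : (applyHist I (initConfig I) G).states P = I.init P :=
    applyHist_states_free I hfree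
  have hse : stepEvent I (applyHist I (initConfig I) G) ((P, none) : Step n I.Msg)
      = some ev := by
    rw [stepEvent_eq, hst]
    exact hinv none
  show (stepEvent I (applyHist I (initConfig I) G) ((P, none) : Step n I.Msg)).toList
      ++ runEvents I _ [] = [ev]
  rw [hse]
  rfl

lemma single_step_applicable (G : List (Step n I.Msg)) (hG : G ∈ Histories I)
    (P : Fin n) : (G ++ [((P, none) : Step n I.Msg)]) ∈ Histories I := by
  rw [mem_Histories_append]
  exact ⟨hG, trivial, trivial⟩

lemma completed_mono {o : ToSOp} {G H : List (Step n I.Msg)}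
    (h : Completed o (events I G)) : Completed o (events I (G ++ H)) := by
  obtain ⟨h1, v, h2⟩ := h
  rw [events_append]
  exact ⟨mem_append_left _ h1, v, mem_append_left _ h2⟩

lemma invoked_mono {o : ToSOp} {G H : List (Step n I.Msg)}
    (h : Event.inv o ∈ events I G) : Event.inv o ∈ events I (G ++ H) := by
  rw [events_append]
  exact mem_append_left _ h

lemma lf_run (hlf : OneResilientLockFree I) {ps : List (Fin n)} (hps : ps ≠ [])
    (hcr : ∀ q : Fin n, q ∉ ps → ∀ q' : Fin n, q' ∉ ps → q = q')
    {G : List (Step n I.Msg)} (hG : G ∈ Histories I) {o : ToSOp}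
    (hproc : I.procOf o ∈ ps) (hpend : Pending o (events I G)) :
    ∃ K, (∀ s ∈ K, s.1 ∈ ps) ∧ (G ++ K) ∈ Histories I ∧
      ∃ o', Completed o' (events I (G ++ K)) ∧ ¬ Completed o' (events I G) := by
  obtain ⟨S, hinf, hcor, hproc', hfair⟩ :=
    scheduler_exists I hps (applyHist I (initConfig I) G)
  have hcrash : AtMostOneCrash S := fun q q' hq hq' =>
    hcr q (fun hmem => hq (hcor q hmem)) q' (fun hmem => hq' (hcor q' hmem))
  obtain ⟨k, o', h1, h2⟩ :=
    hlf G hG (I.procOf o) o rfl hpend S hinf hcrash (hcor _ hproc) hfair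
  refine ⟨prefixSteps S k, ?_, ?_, o', h1, h2⟩
  · intro s hs
    obtain ⟨i, _, rfl⟩ := List.mem_map.1 hs
    exact hproc' i
  · exact (mem_Histories_append I).2 ⟨hG, infApplicable_prefix I hinf k⟩

lemma eventually_test (halg : ToSAlg I p0 p1) (hlf : OneResilientLockFree I)
    {G : List (Step n I.Msg)} (hG : G ∈ Histories I) :
    ∃ H, (G ++ H) ∈ Histories I ∧ ∃ w, TestReturned I (G ++ H) w := by
  have hfr : (List.finRange n) ≠ [] :=
    List.ne_nil_of_mem (List.mem_finRange p0)
  have hcr : ∀ q : Fin n, q ∉ List.finRange n → ∀ q' : Fin n,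
      q' ∉ List.finRange n → q = q' :=
    fun q hq => False.elim (hq (List.mem_finRange q))
  by_cases h0 : ∃ w, TestReturned I G w
  · exact ⟨[], by simpa using hG, by simpa using h0⟩
  · push_neg at h0
    obtain ⟨T, hmem1, hpend⟩ :
        ∃ T, (G ++ T) ∈ Histories I ∧ Pending ToSOp.test (events I (G ++ T)) := by
      by_cases hst : ∃ s ∈ G, s.1 = p0
      · refine ⟨[], by simpa using hG, ?_⟩
        rw [append_nil]
        exact ⟨invoked_of_stepped halg.invokes_test hst,
          fun v hv => h0 v hv⟩
      · push_neg at hst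
        refine ⟨[((p0, none) : Step n I.Msg)], single_step_applicable G hG p0, ?_⟩
        rw [events_invoke_step halg.invokes_test hst]
        constructor
        · exact mem_append_right _ (mem_cons_self)
        · intro v hv
          rcases mem_append.1 hv with h | h
          · exact h0 v h
          · simp at h
    obtain ⟨K, _, hmem2, o', hco', hnco'⟩ :=
      lf_run hlf hfr hcr hmem1 (List.mem_finRange _) hpend
    cases o' with
    | test =>
      obtain ⟨_, v, hv⟩ := hco'
      exact ⟨T ++ K, by rwa [← append_assoc], v, by rwa [TestReturned, ← append_assoc]⟩
    | set =>
      by_cases h2 : ∃ w, TestReturned I (G ++ T ++ K) w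
      · obtain ⟨w, hw⟩ := h2
        exact ⟨T ++ K, by rwa [← append_assoc], w, by rwa [TestReturned, ← append_assoc]⟩
      · push_neg at h2
        have hpend2 : Pending ToSOp.test (events I (G ++ T ++ K)) :=
          ⟨invoked_mono hpend.1, fun v hv => h2 v hv⟩
        obtain ⟨K₂, _, hmem3, o'', hco'', hnco''⟩ :=
          lf_run hlf hfr hcr hmem2 (List.mem_finRange _) hpend2
        cases o'' with
        | set => exact absurd hco' hnco''
        | test =>
          obtain ⟨_, v, hv⟩ := hco''
          refine ⟨T ++ (K ++ K₂), ?_, v, ?_⟩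
          · rwa [← append_assoc, ← append_assoc]
          · rwa [TestReturned, ← append_assoc, ← append_assoc]

lemma not_both_valent (halg : ToSAlg I p0 p1) (hlf : OneResilientLockFree I)
    {G : List (Step n I.Msg)} (hG : G ∈ Histories I) :
    ¬ (ToSValent I G false ∧ ToSValent I G true) := by
  rintro ⟨h0, h1⟩
  obtain ⟨H, hm, w, hw⟩ := eventually_test halg hlf hG
  cases w
  · exact h1.2 H hm (by simpa using hw)
  · exact h0.2 H hm (by simpa using hw)

lemma valent_eq (halg : ToSAlg I p0 p1) (hlf : OneResilientLockFree I)
    {G : List (Step n I.Msg)} {u v : Bool}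
    (hu : ToSValent I G u) (hv : ToSValent I G v) : u = v := by
  cases u <;> cases v
  · rfl
  · exact absurd ⟨hu, hv⟩ (not_both_valent halg hlf hu.1)
  · exact absurd ⟨hv, hu⟩ (not_both_valent halg hlf hu.1)
  · rfl

end LockFree
section SL

variable {I : Impl n ToSOp Bool} {p0 p1 : Fin n}

lemma completion_keep {L L' : List (Event ToSOp Bool)} (hc : IsCompletion L L')
    {o : ToSOp} (hnp : ¬ Pending o L) :
    (∀ ev : Event ToSOp Bool, ev ∈ L → ev.opOf = o → ev ∈ L') ∧
    (∀ v, Event.res o v ∈ L' → Event.res o v ∈ L) := by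
  obtain ⟨removed, R, h1, h2, h3, h4, h5⟩ := hc
  have hro : removed o = false := by
    cases hrem : removed o
    · rfl
    · exact absurd (h1 o hrem) hnp
  constructor
  · intro ev hev hop
    rw [h5]
    apply mem_append_left
    apply List.mem_filter.2
    refine ⟨hev, ?_⟩
    rw [hop, hro]
    rfl
  · intro v hv
    rw [h5] at hv
    rcases mem_append.1 hv with h | h
    · exact (List.mem_filter.1 h).1
    · obtain ⟨o', v', heq, hpend', -⟩ := h2 _ h
      injection heq with ho hv'
      rw [← ho] at hpend'
      exact absurd hpend' hnp

lemma not_pending_of_res {L : List (Event ToSOp Bool)} {o : ToSOp} {v : Bool}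
    (h : Event.res o v ∈ L) : ¬ Pending o L :=
  fun hp => hp.2 v h

lemma set_completed_univalent (halg : ToSAlg I p0 p1)
    (hsl : StronglyLinearizable I ToSSpec)
    {G : List (Step n I.Msg)} (hG : G ∈ Histories I)
    (hset : Completed ToSOp.set (events I G)) :
    ∃ u : Bool, ∀ H, (G ++ H) ∈ Histories I →
      ∀ w, TestReturned I (G ++ H) w → w = u := by
  obtain ⟨f, hf, hpre⟩ := hsl
  obtain ⟨-, ⟨L'G, hcG, hmemG, -⟩, -⟩ := hf G hG
  have hnpset : ¬ Pending ToSOp.set (events I G) := by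
    rintro ⟨-, hnores⟩
    obtain ⟨-, v, hres⟩ := hset
    exact hnores v hres
  have hinvset : Event.inv ToSOp.set ∈ f G :=
    (hmemG _).2 ((completion_keep hcG hnpset).1 _ hset.1 rfl)
  classical
  refine ⟨if h : ∃ w₀, Event.res ToSOp.test w₀ ∈ f G then h.choose else true, ?_⟩
  intro H hm w hw
  obtain ⟨-, ⟨L', hc, hmem, -⟩, hspec⟩ := hf (G ++ H) hm
  have hprefix : f G <+: f (G ++ H) := hpre G (G ++ H) hG hm ⟨H, rfl⟩
  have hres_ev : Event.res ToSOp.test w ∈ events I (G ++ H) := hw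
  have hnp : ¬ Pending ToSOp.test (events I (G ++ H)) := not_pending_of_res hres_ev
  have hwL' : Event.res ToSOp.test w ∈ f (G ++ H) :=
    (hmem _).2 ((completion_keep hc hnp).1 _ hres_ev rfl)
  by_cases h : ∃ w₀, Event.res ToSOp.test w₀ ∈ f G
  · rw [dif_pos h]
    have hw₀ : Event.res ToSOp.test h.choose ∈ f G := h.choose_spec
    have h1 : Event.res ToSOp.test h.choose ∈ events I (G ++ H) :=
      (completion_keep hc hnp).2 _ ((hmem _).1 (hprefix.subset hw₀))
    exact res_test_unique halg.wellFormed hm hres_ev h1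
  · rw [dif_neg h]
    obtain ⟨tail, htail⟩ := hprefix
    obtain ⟨⟨i, hi⟩, hgeti⟩ := List.mem_iff_get.1 hwL'
    obtain ⟨⟨j, hj⟩, hgetj⟩ := List.mem_iff_get.1 hinvset
    have hgeti' := hgeti
    have hgetj' := hgetj
    rw [List.get_eq_getElem] at hgeti' hgetj'
    have hqi : (f (G ++ H))[i]? = some (Event.res ToSOp.test w) := by
      rw [List.getElem?_eq_getElem hi]
      exact congrArg some hgeti'
    have hige : (f G).length ≤ i := by
      by_contra hlt
      push_neg at hlt
      apply h
      refine ⟨w, ?_⟩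
      rw [← htail, List.getElem?_append, if_pos hlt] at hqi
      exact List.mem_of_getElem? hqi
    have hj2 : j < (f (G ++ H)).length := by
      rw [← htail, List.length_append]
      omega
    have hqj : (f (G ++ H))[j]? = some (Event.inv ToSOp.set) := by
      rw [← htail, List.getElem?_append, if_pos hj, List.getElem?_eq_getElem hj]
      exact congrArg some hgetj'
    have hgetj2 : (f (G ++ H)).get ⟨j, hj2⟩ = Event.inv ToSOp.set := by
      rw [List.get_eq_getElem]
      apply Option.some_inj.1
      rw [← List.getElem?_eq_getElem hj2]
      exact hqj
    exact (hspec i hi w hgeti).2 ⟨j, hj2, by omega, hgetj2⟩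

end SL
section Decided

variable {I : Impl n ToSOp Bool} {p0 p1 : Fin n}

lemma valent_of_decider {G : List (Step n I.Msg)} (hG : G ∈ Histories I) {u : Bool}
    (hu : ∀ H, (G ++ H) ∈ Histories I → ∀ w, TestReturned I (G ++ H) w → w = u) :
    ToSValent I G u := by
  refine ⟨hG, fun H hm hr => ?_⟩
  have := hu H hm (!u) hr
  cases u <;> simp at this

lemma decided_pfree (halg : ToSAlg I p0 p1) (hlf : OneResilientLockFree I)
    (hsl : StronglyLinearizable I ToSSpec)
    {GE : List (Step n I.Msg)} (hGE : GE ∈ Histories I) (p : Fin n) :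
    ∃ Hf, (∀ s ∈ Hf, s.1 ≠ p) ∧ (GE ++ Hf) ∈ Histories I ∧
      ∃ u, ToSValent I (GE ++ Hf) u := by
  classical
  by_cases h1 : ∃ w, TestReturned I GE w
  · refine ⟨[], by simp, by simpa using hGE, h1.choose, ?_⟩
    rw [append_nil]
    exact valent_of_returned halg.wellFormed hGE h1.choose_spec
  by_cases h2 : Completed ToSOp.set (events I GE)
  · obtain ⟨u, hu⟩ := set_completed_univalent halg hsl hGE h2
    refine ⟨[], by simp, by simpa using hGE, u, ?_⟩
    rw [append_nil]
    exact valent_of_decider hGE hu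
  push_neg at h1
  -- choose the target operation and its process
  set o : ToSOp := if p = p0 then ToSOp.set else ToSOp.test with ho
  set P : Fin n := if p = p0 then p1 else p0 with hP
  have hproc : I.procOf o = P := by
    by_cases hp : p = p0 <;> simp [ho, hP, hp, halg.proc_set, halg.proc_test]
  have hPp : P ≠ p := by
    by_cases hp : p = p0
    · simp only [hP, if_pos hp]
      rw [hp]
      exact fun hh => halg.distinct hh.symm
    · simp only [hP, if_neg hp]
      exact fun hh => hp hh.symm
  have hinv : ∀ m : Option I.Msg,
      I.eventOf P (I.init P) (I.trans P (I.init P) m).1 = some (Event.inv o) := by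
    by_cases hp : p = p0
    · simp only [ho, hP, if_pos hp]
      exact halg.invokes_set
    · simp only [ho, hP, if_neg hp]
      exact halg.invokes_test
  have hnores : ∀ v, Event.res o v ∉ events I GE := by
    intro v hv
    by_cases hp : p = p0
    · rw [ho] at hv
      rw [if_pos hp] at hv
      exact h2 ⟨(halg.wellFormed GE hGE).2.2 _ _ hv, v, hv⟩
    · rw [ho] at hv
      rw [if_neg hp] at hv
      exact h1 v hv
  -- the list of live processes
  set ps : List (Fin n) := (List.finRange n).filter (fun q => decide (q ≠ p)) with hps
  have hmemps : ∀ q : Fin n, q ∈ ps ↔ q ≠ p := by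
    intro q
    simp [hps, List.mem_filter, List.mem_finRange]
  have hpsne : ps ≠ [] := List.ne_nil_of_mem ((hmemps P).2 hPp)
  have hcr : ∀ q : Fin n, q ∉ ps → ∀ q' : Fin n, q' ∉ ps → q = q' := by
    intro q hq q' hq'
    have hqp : q = p := by
      by_contra hh; exact hq ((hmemps q).2 hh)
    have hq'p : q' = p := by
      by_contra hh; exact hq' ((hmemps q').2 hh)
    rw [hqp, hq'p]
  -- make the target operation pending
  obtain ⟨T, hTfree, hmemT, hpend⟩ : ∃ T, (∀ s ∈ T, s.1 ≠ p) ∧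
      (GE ++ T) ∈ Histories I ∧ Pending o (events I (GE ++ T)) := by
    by_cases hst : ∃ s ∈ GE, s.1 = P
    · refine ⟨[], by simp, by simpa using hGE, ?_⟩
      rw [append_nil]
      exact ⟨invoked_of_stepped hinv hst, fun v hv => hnores v hv⟩
    · push_neg at hst
      refine ⟨[((P, none) : Step n I.Msg)], ?_, single_step_applicable GE hGE P, ?_⟩
      · intro s hs
        rw [mem_singleton.1 hs]
        exact hPp
      · rw [events_invoke_step hinv hst]
        constructor
        · exact mem_append_right _ (mem_cons_self)
        · intro v hv
          rcases mem_append.1 hv with h | h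
          · exact hnores v h
          · simp at h
  obtain ⟨K, hKps, hmemK, o', hco', -⟩ :=
    lf_run hlf hpsne hcr hmemT (hproc ▸ (hmemps P).2 hPp) hpend
  have hKfree : ∀ s ∈ K, s.1 ≠ p := fun s hs => (hmemps _).1 (hKps s hs)
  refine ⟨T ++ K, ?_, ?_, ?_⟩
  · intro s hs
    rcases mem_append.1 hs with h | h
    · exact hTfree s h
    · exact hKfree s h
  · rwa [← append_assoc]
  · rw [← append_assoc]
    cases o' with
    | test =>
      obtain ⟨-, v, hv⟩ := hco'
      exact ⟨v, valent_of_returned halg.wellFormed hmemK hv⟩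
    | set =>
      obtain ⟨u, hu⟩ := set_completed_univalent halg hsl hmemK hco'
      exact ⟨u, valent_of_decider hmemK hu⟩

end Decided
section Helpers

lemma exists_flip {α : Type _} (P : List α → Prop) :
    ∀ K : List α, P [] → ¬ P K →
      ∃ G s, (∃ t, G ++ s :: t = K) ∧ P G ∧ ¬ P (G ++ [s]) := by
  intro K
  induction K using List.reverseRecOn with
  | nil => intro h hn; exact absurd h hn
  | append_singleton K' s ih =>
    intro h hn
    by_cases hK' : P K'
    · exact ⟨K', s, ⟨[], rfl⟩, hK', hn⟩
    · obtain ⟨G, s', ⟨t, ht⟩, h1, h2⟩ := ih h hK'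
      refine ⟨G, s', ⟨t ++ [s], ?_⟩, h1, h2⟩
      rw [← ht]
      simp

lemma first_split {α : Type _} {a : α} {l : List α} (h : a ∈ l) :
    ∃ s t, l = s ++ a :: t ∧ a ∉ s := by
  classical
  induction l with
  | nil => simp at h
  | cons b l ih =>
    by_cases hb : b = a
    · exact ⟨[], l, by rw [hb]; rfl, List.not_mem_nil (a := a)⟩
    · have hmem : a ∈ l := by
        rcases mem_cons.1 h with h' | h'
        · exact absurd h'.symm hb
        · exact h'
      obtain ⟨s, t, h1, h2⟩ := ih hmem
      refine ⟨b :: s, t, by rw [h1]; rfl, ?_⟩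
      intro hh
      rcases mem_cons.1 hh with h' | h'
      · exact hb h'.symm
      · exact h2 h'

end Helpers
set_option maxHeartbeats 1000000 in
/-- **Claim 3.** Suppose `I` is additionally strongly linearizable.  Let `C` be any
reachable bivalent configuration of algorithm `A` (reached by a history `H₀`), and let
`e` be any step applicable to `C`.  Among the configurations obtained by applying `e`
to a configuration reachable from `C` without applying `e`, there is a bivalent one. -/
theorem ToS_bivalent_extension (n : ℕ) (hn : 2 ≤ n)
    (I : Impl n ToSOp Bool) (p0 p1 : Fin n)
    (halg : ToSAlg I p0 p1) (hlf : OneResilientLockFree I)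
    (hsl : StronglyLinearizable I ToSSpec)
    (H₀ : List (Step n I.Msg)) (hbi : ToSBivalent I H₀)
    (e : Step n I.Msg) (he : Applicable I (applyHist I (initConfig I) H₀) e) :
    ∃ H₁ : List (Step n I.Msg),
      ApplicableHist I (applyHist I (initConfig I) H₀) H₁ ∧
      e ∉ H₁ ∧
      Applicable I (applyHist I (initConfig I) (H₀ ++ H₁)) e ∧
      ToSBivalent I (H₀ ++ H₁ ++ [e]) := by
  classical
  obtain ⟨hH₀, hnb0, hnb1⟩ := hbi
  by_contra hcon
  push_neg at hcon
  -- abbreviations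
  have hGoodmem : ∀ K, ApplicableHist I (applyHist I (initConfig I) H₀) K →
      Applicable I (applyHist I (initConfig I) (H₀ ++ K)) e →
      (H₀ ++ K ++ [e]) ∈ Histories I := by
    intro K h1 h2
    rw [append_assoc, mem_Histories_append]
    refine ⟨hH₀, ?_⟩
    rw [ApplicableHist_append]
    exact ⟨h1, by rwa [applyHist_append] at h2, trivial⟩
  have hval : ∀ K, ApplicableHist I (applyHist I (initConfig I) H₀) K → e ∉ K →
      Applicable I (applyHist I (initConfig I) (H₀ ++ K)) e →
      ToSValent I (H₀ ++ K ++ [e]) false ∨ ToSValent I (H₀ ++ K ++ [e]) true := by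
    intro K h1 h2 h3
    have hmem := hGoodmem K h1 h3
    have hnbiv := hcon K h1 h2 h3
    rw [ToSBivalent] at hnbiv
    push_neg at hnbiv
    by_cases hv0 : ToSValent I (H₀ ++ K ++ [e]) false
    · exact Or.inl hv0
    · exact Or.inr (hnbiv hmem hv0)
  -- producers of valent-(true/false) results
  have hprod : ∀ w : Bool, (¬ ToSValent I H₀ w) →
      ∃ K, ApplicableHist I (applyHist I (initConfig I) H₀) K ∧ e ∉ K ∧
        Applicable I (applyHist I (initConfig I) (H₀ ++ K)) e ∧
        ¬ ToSValent I (H₀ ++ K ++ [e]) w := by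
    intro w hnw
    obtain ⟨H, hm, hret⟩ := (not_valent_iff hH₀).1 hnw
    have happ : ApplicableHist I (applyHist I (initConfig I) H₀) H :=
      ((mem_Histories_append I).1 hm).2
    by_cases he' : e ∈ H
    · obtain ⟨K, t, hKt, hnK⟩ := first_split he'
      subst hKt
      rw [ApplicableHist_append] at happ
      have happ_e : Applicable I (applyHist I (initConfig I) (H₀ ++ K)) e := by
        rw [applyHist_append]
        exact happ.2.1
      refine ⟨K, happ.1, hnK, happ_e, ?_⟩
      have hmem' := hGoodmem K happ.1 happ_e
      rw [not_valent_iff hmem']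
      have hsh : (H₀ ++ K ++ [e]) ++ t = H₀ ++ (K ++ e :: t) := by simp
      exact ⟨t, by rw [hsh]; exact hm, by rw [TestReturned, hsh]; exact hret⟩
    · have happ_e : Applicable I (applyHist I (initConfig I) (H₀ ++ H)) e := by
        rw [applyHist_append]
        exact Applicable_preserved_hist I he happ he'
      refine ⟨H, happ, he', happ_e, ?_⟩
      have hmem' := hGoodmem H happ happ_e
      rw [not_valent_iff hmem']
      exact ⟨[], by rw [append_nil]; exact hmem',
        by rw [TestReturned, append_nil]; exact testReturned_mono hret⟩
  -- chain prefix conditions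
  have hchain : ∀ K : List (Step n I.Msg),
      ApplicableHist I (applyHist I (initConfig I) H₀) K → e ∉ K →
      ∀ G', G' <+: K →
        ApplicableHist I (applyHist I (initConfig I) H₀) G' ∧ e ∉ G' ∧
        Applicable I (applyHist I (initConfig I) (H₀ ++ G')) e := by
    rintro K hK heK G' ⟨t, rfl⟩
    rw [ApplicableHist_append] at hK
    have h2 : e ∉ G' := fun h => heK (mem_append_left _ h)
    refine ⟨hK.1, h2, ?_⟩
    rw [applyHist_append]
    exact Applicable_preserved_hist I he hK.1 h2
  obtain ⟨K1, hK1app, hK1ne, hK1e, hK1v⟩ := hprod false hnb0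
  obtain ⟨K0, hK0app, hK0ne, hK0e, hK0v⟩ := hprod true hnb1
  have hK1val : ToSValent I (H₀ ++ K1 ++ [e]) true := by
    rcases hval K1 hK1app hK1ne hK1e with h | h
    · exact absurd h hK1v
    · exact h
  have hK0val : ToSValent I (H₀ ++ K0 ++ [e]) false := by
    rcases hval K0 hK0app hK0ne hK0e with h | h
    · exact h
    · exact absurd h hK0v
  -- nil is a good history
  have hnil_e : Applicable I (applyHist I (initConfig I) (H₀ ++ [])) e := by
    rw [append_nil]
    exact he
  -- the flip predicate
  set Pq : List (Step n I.Msg) → Prop :=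
    fun K => ToSValent I (H₀ ++ K ++ [e]) true with hPq
  -- extract a neighboring pair with opposite valences
  obtain ⟨G, s, hGapp, hGsapp, hGsne, hGee, hGse, v, hv, hv'⟩ :
      ∃ (G : List (Step n I.Msg)) (s : Step n I.Msg),
        ApplicableHist I (applyHist I (initConfig I) H₀) G ∧
        ApplicableHist I (applyHist I (initConfig I) H₀) (G ++ [s]) ∧
        e ∉ (G ++ [s]) ∧
        Applicable I (applyHist I (initConfig I) (H₀ ++ G)) e ∧
        Applicable I (applyHist I (initConfig I) (H₀ ++ (G ++ [s]))) e ∧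
        ∃ v : Bool, ToSValent I (H₀ ++ G ++ [e]) v ∧
          ToSValent I (H₀ ++ (G ++ [s]) ++ [e]) (!v) := by
    by_cases h0 : Pq []
    · have hnK0 : ¬ Pq K0 := by
        intro hP
        have := valent_eq halg hlf hP hK0val
        simp at this
      obtain ⟨G, s, ⟨t, ht⟩, hPG, hPGs⟩ := exists_flip Pq K0 h0 hnK0
      have hq1 : G <+: K0 := ⟨s :: t, ht⟩
      have hq2 : (G ++ [s]) <+: K0 := ⟨t, by rw [← ht]; simp⟩
      obtain ⟨hg1, hg2, hg3⟩ := hchain K0 hK0app hK0ne G hq1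
      obtain ⟨ha1, ha2, ha3⟩ := hchain K0 hK0app hK0ne (G ++ [s]) hq2
      have hvfalse : ToSValent I (H₀ ++ (G ++ [s]) ++ [e]) false := by
        rcases hval (G ++ [s]) ha1 ha2 ha3 with h | h
        · exact h
        · exact absurd h hPGs
      exact ⟨G, s, hg1, ha1, ha2, hg3, ha3, true, hPG, hvfalse⟩
    · have hnK1 : ¬ (¬ Pq ·) K1 := not_not.2 hK1val
      obtain ⟨G, s, ⟨t, ht⟩, hPG, hPGs⟩ := exists_flip (¬ Pq ·) K1 h0 hnK1
      have hq1 : G <+: K1 := ⟨s :: t, ht⟩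
      have hq2 : (G ++ [s]) <+: K1 := ⟨t, by rw [← ht]; simp⟩
      obtain ⟨hg1, hg2, hg3⟩ := hchain K1 hK1app hK1ne G hq1
      obtain ⟨ha1, ha2, ha3⟩ := hchain K1 hK1app hK1ne (G ++ [s]) hq2
      have hvfalse : ToSValent I (H₀ ++ G ++ [e]) false := by
        rcases hval G hg1 hg2 hg3 with h | h
        · exact h
        · exact absurd h hPG
      exact ⟨G, s, hg1, ha1, ha2, hg3, ha3, false, hvfalse, not_not.1 hPGs⟩
  have hsne : s ≠ e := fun h => hGsne (mem_append_right _ (h ▸ mem_cons_self))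
  -- basic configurations and applicabilities
  have hcfg_snoc : ∀ (X : List (Step n I.Msg)) (a : Step n I.Msg),
      applyHist I (initConfig I) (X ++ [a]) = applyStep I (applyHist I (initConfig I) X) a := by
    intro X a
    rw [applyHist_append]
    rfl
  have hrun : ∀ (X : Config I) (a : Step n I.Msg),
      runEvents I X [a] = (stepEvent I X a).toList := by
    intro X a
    show _ ++ _ = _
    rw [runEvents]
    exact append_nil _
  have hsnoc : ∀ (X : List (Step n I.Msg)) (a : Step n I.Msg), X ∈ Histories I →
      Applicable I (applyHist I (initConfig I) X) a → (X ++ [a]) ∈ Histories I := by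
    intro X a hX ha
    rw [mem_Histories_append]
    exact ⟨hX, ha, trivial⟩
  have hGEmem : (H₀ ++ G) ∈ Histories I := (mem_Histories_append I).2 ⟨hH₀, hGapp⟩
  have hs_E : Applicable I (applyHist I (initConfig I) (H₀ ++ G)) s := by
    have h := hGsapp
    rw [ApplicableHist_append] at h
    have h2 := h.2.1
    rwa [← applyHist_append] at h2
  have he_after : Applicable I (applyStep I (applyHist I (initConfig I) (H₀ ++ G)) s) e := by
    have h := hGse
    rw [← append_assoc] at h
    rwa [hcfg_snoc] at h
  rw [← append_assoc] at hv'
  have hGEe : (H₀ ++ G ++ [e]) ∈ Histories I := hsnoc _ e hGEmem hGee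
  have hGEs : (H₀ ++ G ++ [s]) ∈ Histories I := hsnoc _ s hGEmem hs_E
  have hGEse : ((H₀ ++ G ++ [s]) ++ [e]) ∈ Histories I :=
    hsnoc _ e hGEs (by rw [hcfg_snoc]; exact he_after)
  by_cases hfst : s.1 = e.1
  · -- same process: use the decided p-free extension
    obtain ⟨Hf, hHfFree, hmemA, u, hu⟩ := decided_pfree halg hlf hsl hGEmem e.1
    have hHfFree_s : ∀ x ∈ Hf, x.1 ≠ s.1 := fun x hx => by
      rw [hfst]; exact hHfFree x hx
    have hHf_app : ApplicableHist I (applyHist I (initConfig I) (H₀ ++ G)) Hf :=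
      ((mem_Histories_append I).1 hmemA).2
    obtain ⟨hHf_e, happ_Ae, hcomm_e⟩ := hist_comm I hHfFree hGee hHf_app
    obtain ⟨hHf_s, happ_As, hcomm_s⟩ := hist_comm I hHfFree_s hs_E hHf_app
    obtain ⟨hHf_se, happ_Ase, hcomm_se⟩ := hist_comm I hHfFree he_after hHf_s
    -- histories
    have hB1 : ((H₀ ++ G ++ [e]) ++ Hf) ∈ Histories I := by
      rw [mem_Histories_append]
      refine ⟨hGEe, ?_⟩
      rw [hcfg_snoc]
      exact hHf_e
    have hB1' : ((H₀ ++ G ++ Hf) ++ [e]) ∈ Histories I :=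
      hsnoc _ e hmemA (by
        rw [applyHist_append I (initConfig I) (H₀ ++ G) Hf]
        exact happ_Ae)
    have hB2 : (((H₀ ++ G ++ [s]) ++ [e]) ++ Hf) ∈ Histories I := by
      rw [mem_Histories_append]
      refine ⟨hGEse, ?_⟩
      rw [hcfg_snoc (H₀ ++ G ++ [s]) e, hcfg_snoc (H₀ ++ G) s]
      exact hHf_se
    have hAs_mem : ((H₀ ++ G ++ Hf) ++ [s]) ∈ Histories I :=
      hsnoc _ s hmemA (by
        rw [applyHist_append I (initConfig I) (H₀ ++ G) Hf]
        exact happ_As)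
    have hB2' : (((H₀ ++ G ++ Hf) ++ [s]) ++ [e]) ∈ Histories I :=
      hsnoc _ e hAs_mem (by
        rw [hcfg_snoc (H₀ ++ G ++ Hf) s, applyHist_append I (initConfig I) (H₀ ++ G) Hf,
          ← hcomm_s]
        exact happ_Ase)
    -- valences
    have hvB1 : ToSValent I ((H₀ ++ G ++ [e]) ++ Hf) v := valent_mono hv hB1
    have huB1 : ToSValent I ((H₀ ++ G ++ Hf) ++ [e]) u := valent_mono hu hB1'
    have hvB2 : ToSValent I ((((H₀ ++ G) ++ [s]) ++ [e]) ++ Hf) (!v) := valent_mono hv' hB2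
    have huB2 : ToSValent I (((H₀ ++ G ++ Hf) ++ [s]) ++ [e]) u :=
      valent_mono (valent_mono hu hAs_mem) hB2'
    -- transport facts
    have hrunHf_e : runEvents I (applyStep I (applyHist I (initConfig I) (H₀ ++ G)) e) Hf
        = runEvents I (applyHist I (initConfig I) (H₀ ++ G)) Hf :=
      runEvents_agree I hHfFree (fun q hq => applyStep_states_ne I hq)
    have hrunHf_se : runEvents I
          (applyStep I (applyStep I (applyHist I (initConfig I) (H₀ ++ G)) s) e) Hf
        = runEvents I (applyHist I (initConfig I) (H₀ ++ G)) Hf :=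
      runEvents_agree I hHfFree (fun q hq => by
        rw [applyStep_states_ne I hq, applyStep_states_ne I (fun h => hq (h.trans hfst))])
    have hAfree_e : (applyHist I (applyHist I (initConfig I) (H₀ ++ G)) Hf).states e.1
        = (applyHist I (initConfig I) (H₀ ++ G)).states e.1 :=
      applyHist_states_free I hHfFree
    have hAfree_s : (applyHist I (applyHist I (initConfig I) (H₀ ++ G)) Hf).states s.1
        = (applyHist I (initConfig I) (H₀ ++ G)).states s.1 :=
      applyHist_states_free I hHfFree_s
    have hstepA_e : stepEvent I (applyHist I (applyHist I (initConfig I) (H₀ ++ G)) Hf) e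
        = stepEvent I (applyHist I (initConfig I) (H₀ ++ G)) e :=
      stepEvent_congr I hAfree_e
    have hstepA_s : stepEvent I (applyHist I (applyHist I (initConfig I) (H₀ ++ G)) Hf) s
        = stepEvent I (applyHist I (initConfig I) (H₀ ++ G)) s :=
      stepEvent_congr I hAfree_s
    have hstepA_se : stepEvent I
          (applyStep I (applyHist I (applyHist I (initConfig I) (H₀ ++ G)) Hf) s) e
        = stepEvent I (applyStep I (applyHist I (initConfig I) (H₀ ++ G)) s) e := by
      apply stepEvent_congr
      rw [← hfst, applyStep_states_self, applyStep_states_self, hAfree_s]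
    -- transport B1 → B1'
    have hcfgB : applyHist I (initConfig I) ((H₀ ++ G ++ [e]) ++ Hf)
        = applyHist I (initConfig I) ((H₀ ++ G ++ Hf) ++ [e]) := by
      have hL : applyHist I (initConfig I) ((H₀ ++ G ++ [e]) ++ Hf)
          = applyStep I (applyHist I (applyHist I (initConfig I) (H₀ ++ G)) Hf) e := by
        rw [applyHist_append I (initConfig I) (H₀ ++ G ++ [e]) Hf, hcfg_snoc (H₀ ++ G) e]
        exact hcomm_e
      have hR : applyHist I (initConfig I) ((H₀ ++ G ++ Hf) ++ [e])
          = applyStep I (applyHist I (applyHist I (initConfig I) (H₀ ++ G)) Hf) e := by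
        rw [hcfg_snoc (H₀ ++ G ++ Hf) e, applyHist_append I (initConfig I) (H₀ ++ G) Hf]
      exact hL.trans hR.symm
    have hevB : ∀ ev : Event ToSOp Bool,
        ev ∈ events I ((H₀ ++ G ++ [e]) ++ Hf) ↔ ev ∈ events I ((H₀ ++ G ++ Hf) ++ [e]) := by
      intro ev
      rw [events_append I (H₀ ++ G ++ [e]) Hf, events_append I (H₀ ++ G) [e],
        events_append I (H₀ ++ G ++ Hf) [e], events_append I (H₀ ++ G) Hf,
        hcfg_snoc (H₀ ++ G) e, applyHist_append I (initConfig I) (H₀ ++ G) Hf,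
        hrun, hrun, hrunHf_e, hstepA_e]
      simp only [mem_append]
      tauto
    have hvB1' : ToSValent I ((H₀ ++ G ++ Hf) ++ [e]) v :=
      valent_transport hB1' hcfgB hevB hvB1
    have huv : u = v := valent_eq halg hlf huB1 hvB1'
    -- transport B2 → B2'
    have hcfgB2 : applyHist I (initConfig I) (((H₀ ++ G ++ [s]) ++ [e]) ++ Hf)
        = applyHist I (initConfig I) (((H₀ ++ G ++ Hf) ++ [s]) ++ [e]) := by
      have hL : applyHist I (initConfig I) (((H₀ ++ G ++ [s]) ++ [e]) ++ Hf)
          = applyStep I (applyStep I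
              (applyHist I (applyHist I (initConfig I) (H₀ ++ G)) Hf) s) e := by
        rw [applyHist_append I (initConfig I) ((H₀ ++ G ++ [s]) ++ [e]) Hf,
          hcfg_snoc (H₀ ++ G ++ [s]) e, hcfg_snoc (H₀ ++ G) s, hcomm_se, hcomm_s]
      have hR : applyHist I (initConfig I) (((H₀ ++ G ++ Hf) ++ [s]) ++ [e])
          = applyStep I (applyStep I
              (applyHist I (applyHist I (initConfig I) (H₀ ++ G)) Hf) s) e := by
        rw [hcfg_snoc ((H₀ ++ G ++ Hf) ++ [s]) e, hcfg_snoc (H₀ ++ G ++ Hf) s,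
          applyHist_append I (initConfig I) (H₀ ++ G) Hf]
      exact hL.trans hR.symm
    have hevB2 : ∀ ev : Event ToSOp Bool,
        ev ∈ events I (((H₀ ++ G ++ [s]) ++ [e]) ++ Hf) ↔
          ev ∈ events I (((H₀ ++ G ++ Hf) ++ [s]) ++ [e]) := by
      intro ev
      rw [events_append I ((H₀ ++ G ++ [s]) ++ [e]) Hf, events_append I (H₀ ++ G ++ [s]) [e],
        events_append I (H₀ ++ G) [s],
        events_append I ((H₀ ++ G ++ Hf) ++ [s]) [e], events_append I (H₀ ++ G ++ Hf) [s],
        events_append I (H₀ ++ G) Hf,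
        hcfg_snoc (H₀ ++ G ++ [s]) e, hcfg_snoc (H₀ ++ G) s,
        hcfg_snoc (H₀ ++ G ++ Hf) s, applyHist_append I (initConfig I) (H₀ ++ G) Hf,
        hrun, hrun, hrun, hrun, hrunHf_se, hstepA_s, hstepA_se]
      simp only [mem_append]
      tauto
    have hvB2' : ToSValent I (((H₀ ++ G ++ Hf) ++ [s]) ++ [e]) (!v) := by
      apply valent_transport hB2' hcfgB2 hevB2
      exact hvB2
    have hunv : u = !v := valent_eq halg hlf huB2 hvB2'
    rw [huv] at hunv
    exact absurd hunv (by cases v <;> simp)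
  · -- different processes: commute the two steps
    have hs_after : Applicable I (applyStep I (applyHist I (initConfig I) (H₀ ++ G)) e) s :=
      Applicable_preserved_step I hs_E (step_ne_of_fst_ne I (Ne.symm hfst)) hGee
    have hX1 : ((H₀ ++ G ++ [e]) ++ [s]) ∈ Histories I :=
      hsnoc _ s hGEe (by rw [hcfg_snoc]; exact hs_after)
    have hv1 : ToSValent I ((H₀ ++ G ++ [e]) ++ [s]) v := valent_mono hv hX1
    have hcfg12 : applyHist I (initConfig I) ((H₀ ++ G ++ [e]) ++ [s])
        = applyHist I (initConfig I) ((H₀ ++ G ++ [s]) ++ [e]) := by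
      rw [hcfg_snoc (H₀ ++ G ++ [e]) s, hcfg_snoc (H₀ ++ G) e,
        hcfg_snoc (H₀ ++ G ++ [s]) e, hcfg_snoc (H₀ ++ G) s]
      exact applyStep_comm I (Ne.symm hfst) hGee hs_E
    have hevst : stepEvent I (applyStep I (applyHist I (initConfig I) (H₀ ++ G)) e) s
        = stepEvent I (applyHist I (initConfig I) (H₀ ++ G)) s :=
      stepEvent_congr I (applyStep_states_ne I hfst)
    have hevst' : stepEvent I (applyStep I (applyHist I (initConfig I) (H₀ ++ G)) s) e
        = stepEvent I (applyHist I (initConfig I) (H₀ ++ G)) e :=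
      stepEvent_congr I (applyStep_states_ne I (Ne.symm hfst))
    have hev12 : ∀ ev : Event ToSOp Bool,
        ev ∈ events I ((H₀ ++ G ++ [e]) ++ [s]) ↔ ev ∈ events I ((H₀ ++ G ++ [s]) ++ [e]) := by
      intro ev
      rw [events_append I (H₀ ++ G ++ [e]) [s], events_append I (H₀ ++ G) [e],
        events_append I (H₀ ++ G ++ [s]) [e], events_append I (H₀ ++ G) [s],
        hcfg_snoc (H₀ ++ G) e, hcfg_snoc (H₀ ++ G) s,
        hrun, hrun, hrun, hrun, hevst, hevst']
      simp only [mem_append]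
      tauto
    have hv2 : ToSValent I ((H₀ ++ G ++ [s]) ++ [e]) v :=
      valent_transport hGEse hcfg12 hev12 hv1
    have hfinal : v = !v := valent_eq halg hlf hv2 hv'
    exact absurd hfinal (by cases v <;> simp)

end MP
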